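/- arXiv:2605.28957 — 2 statements merged into one kernel-verified Lean document; each statement's English description precedes it below -/
import Mathlib

section
/- Let F = {log f_n} be a superadditive sequence of positive continuous functions on a one-sided subshift X with the strong specification property with specification number k. Then X is right balanced with respect to F if and only if F has bounded variation and there exists C₁ ≥ 1 such that for every n, m ∈ ℕ and every allowable word u of length m: Σ_{v∈F_{n+k}(u)} f_{m+n+k}(x_{uv}) ≤ C₁ f_m(x_u) Σ_{v∈B_n(X)} f_n(x_v) for each choice of points x_{uv} ∈ [uv], x_u ∈ [u], x_v ∈ [v]. -/
open scoped Classical BigOperators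
open Filter MeasureTheory

namespace Paper

/-- Points of the full one-sided shift over `k` symbols. -/
abbrev Pt (k : ℕ) := ℕ → Fin k

variable {k : ℕ}

/-- The one-sided shift map. -/
def shift (x : Pt k) : Pt k := fun n => x (n + 1)

/-- A one-sided subshift: a closed shift-invariant subset. -/
def IsSubshift (X : Set (Pt k)) : Prop := IsClosed X ∧ ∀ x ∈ X, shift x ∈ X

/-- The cylinder set `[u]` of a word `u` of length `n` inside `X`. -/
def cylinder (X : Set (Pt k)) {n : ℕ} (u : Fin n → Fin k) : Set (Pt k) :=
  {x | x ∈ X ∧ ∀ i : Fin n, x (i : ℕ) = u i}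

/-- A word is allowable if its cylinder in `X` is nonempty. -/
def Allowable (X : Set (Pt k)) {n : ℕ} (u : Fin n → Fin k) : Prop :=
  (cylinder X u).Nonempty

/-- `B_n(X)`: the finite set of allowable words of length `n`. -/
noncomputable def words (X : Set (Pt k)) (n : ℕ) : Finset (Fin n → Fin k) :=
  Finset.univ.filter fun u => Allowable X u

/-- `F_n(u)`: words `v` of length `n` with `uv` allowable. -/
noncomputable def Fext (X : Set (Pt k)) {m : ℕ} (u : Fin m → Fin k) (n : ℕ) :
    Finset (Fin n → Fin k) :=
  Finset.univ.filter fun v => Allowable X (Fin.append u v)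

/-- `P_n(u)`: words `v` of length `n` with `vu` allowable. -/
noncomputable def Pext (X : Set (Pt k)) {m : ℕ} (u : Fin m → Fin k) (n : ℕ) :
    Finset (Fin n → Fin k) :=
  Finset.univ.filter fun v => Allowable X (Fin.append v u)

/-- `F = {log f_n}` is a sequence of positive continuous functions on `X`. -/
def GoodSeq (X : Set (Pt k)) (f : ℕ → Pt k → ℝ) : Prop :=
  ∀ n, ContinuousOn (f n) X ∧ ∀ x ∈ X, 0 < f n x

/-- The right balanced condition with constant `C` and threshold `K`. -/
def RightBalancedWith (X : Set (Pt k)) (f : ℕ → Pt k → ℝ) (C : ℝ) (K : ℕ) : Prop :=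
  ∀ m n : ℕ, 0 < m → K ≤ n → ∀ u : Fin m → Fin k, u ∈ words X m →
    ∀ xu ∈ cylinder X u,
    ∀ y : (Fin n → Fin k) → Pt k,
      (∀ v ∈ Fext X u n, y v ∈ cylinder X (Fin.append u v)) →
    ∀ z : (Fin n → Fin k) → Pt k,
      (∀ w ∈ words X n, z w ∈ cylinder X w) →
      1 / C ≤ (∑ v ∈ Fext X u n, f (m + n) (y v)) /
          (f m xu * ∑ w ∈ words X n, f n (z w)) ∧
      (∑ v ∈ Fext X u n, f (m + n) (y v)) /
          (f m xu * ∑ w ∈ words X n, f n (z w)) ≤ C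

/-- The left balanced condition with constant `C` and threshold `K`. -/
def LeftBalancedWith (X : Set (Pt k)) (f : ℕ → Pt k → ℝ) (C : ℝ) (K : ℕ) : Prop :=
  ∀ m n : ℕ, 0 < m → K ≤ n → ∀ u : Fin m → Fin k, u ∈ words X m →
    ∀ xu ∈ cylinder X u,
    ∀ y : (Fin n → Fin k) → Pt k,
      (∀ v ∈ Pext X u n, y v ∈ cylinder X (Fin.append v u)) →
    ∀ z : (Fin n → Fin k) → Pt k,
      (∀ w ∈ words X n, z w ∈ cylinder X w) →
      1 / C ≤ (∑ v ∈ Pext X u n, f (n + m) (y v)) /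
          (f m xu * ∑ w ∈ words X n, f n (z w)) ∧
      (∑ v ∈ Pext X u n, f (n + m) (y v)) /
          (f m xu * ∑ w ∈ words X n, f n (z w)) ≤ C

def RightBalanced (X : Set (Pt k)) (f : ℕ → Pt k → ℝ) : Prop :=
  ∃ C : ℝ, 1 ≤ C ∧ ∃ K : ℕ, 1 ≤ K ∧ RightBalancedWith X f C K

def LeftBalanced (X : Set (Pt k)) (f : ℕ → Pt k → ℝ) : Prop :=
  ∃ C : ℝ, 1 ≤ C ∧ ∃ K : ℕ, 1 ≤ K ∧ LeftBalancedWith X f C K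

def Balanced (X : Set (Pt k)) (f : ℕ → Pt k → ℝ) : Prop :=
  RightBalanced X f ∧ LeftBalanced X f

/-- Boundedly supermultiplicative with constant `C` and threshold `K`. -/
def BSMWith (X : Set (Pt k)) (f : ℕ → Pt k → ℝ) (C : ℝ) (K : ℕ) : Prop :=
  ∀ m n : ℕ, 0 < m → K ≤ n →
    ∀ a : (Fin m → Fin k) → Pt k, (∀ u ∈ words X m, a u ∈ cylinder X u) →
    ∀ b : (Fin n → Fin k) → Pt k, (∀ v ∈ words X n, b v ∈ cylinder X v) →
    ∀ c : (Fin (m + n) → Fin k) → Pt k, (∀ w ∈ words X (m + n), c w ∈ cylinder X w) →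
      1 / C ≤ ((∑ u ∈ words X m, f m (a u)) * (∑ v ∈ words X n, f n (b v))) /
          (∑ w ∈ words X (m + n), f (m + n) (c w)) ∧
      ((∑ u ∈ words X m, f m (a u)) * (∑ v ∈ words X n, f n (b v))) /
          (∑ w ∈ words X (m + n), f (m + n) (c w)) ≤ C

def BSM (X : Set (Pt k)) (f : ℕ → Pt k → ℝ) : Prop :=
  ∃ C : ℝ, 1 ≤ C ∧ ∃ K : ℕ, 1 ≤ K ∧ BSMWith X f C K

/-- The Gibbs inequality for `μ` with pressure constant `P` and constant `C`. -/
def GibbsWith (X : Set (Pt k)) (f : ℕ → Pt k → ℝ) (μ : Measure (Pt k)) (P C : ℝ) : Prop :=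
  ∀ n : ℕ, 0 < n → ∀ u : Fin n → Fin k, u ∈ words X n → ∀ x ∈ cylinder X u,
    1 / C ≤ (μ (cylinder X u)).toReal / (Real.exp (-(n : ℝ) * P) * f n x) ∧
    (μ (cylinder X u)).toReal / (Real.exp (-(n : ℝ) * P) * f n x) ≤ C

/-- `μ` is a (Borel probability) Gibbs measure on `X` for the sequence `f`. -/
def IsGibbs (X : Set (Pt k)) (f : ℕ → Pt k → ℝ) (μ : Measure (Pt k)) : Prop :=
  IsProbabilityMeasure μ ∧ μ Xᶜ = 0 ∧ ∃ P C : ℝ, 0 < C ∧ GibbsWith X f μ P C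

/-- Shift invariance of a measure. -/
def InvariantM (μ : Measure (Pt k)) : Prop :=
  ∀ s : Set (Pt k), MeasurableSet s → μ (shift ⁻¹' s) = μ s

/-- Ergodicity of a measure with respect to the shift. -/
def ErgodicM (μ : Measure (Pt k)) : Prop :=
  ∀ s : Set (Pt k), MeasurableSet s → shift ⁻¹' s = s → μ s = 0 ∨ μ s = 1

/-- Subadditivity of the sequence with constant `C`. -/
def SubaddWith (X : Set (Pt k)) (f : ℕ → Pt k → ℝ) (C : ℝ) : Prop :=
  0 ≤ C ∧ ∀ x ∈ X, ∀ m n : ℕ, f (m + n) x ≤ Real.exp C * (f m x * f n (shift^[m] x))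

def Subadditive (X : Set (Pt k)) (f : ℕ → Pt k → ℝ) : Prop := ∃ C, SubaddWith X f C

/-- Superadditivity of the sequence with constant `C`. -/
def SuperaddWith (X : Set (Pt k)) (f : ℕ → Pt k → ℝ) (C : ℝ) : Prop :=
  0 ≤ C ∧ ∀ x ∈ X, ∀ m n : ℕ, Real.exp (-C) * (f m x * f n (shift^[m] x)) ≤ f (m + n) x

def Superadditive (X : Set (Pt k)) (f : ℕ → Pt k → ℝ) : Prop := ∃ C, SuperaddWith X f C

/-- Bounded variation with constant `M`. -/
def BddVarWith (X : Set (Pt k)) (f : ℕ → Pt k → ℝ) (M : ℝ) : Prop :=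
  1 ≤ M ∧ ∀ n : ℕ, ∀ x ∈ X, ∀ y ∈ X, (∀ i < n, x i = y i) → f n x / f n y ≤ M

def BddVar (X : Set (Pt k)) (f : ℕ → Pt k → ℝ) : Prop := ∃ M, BddVarWith X f M

/-- The partition sums `Z_n(F)`. -/
noncomputable def Zn (X : Set (Pt k)) (f : ℕ → Pt k → ℝ) (n : ℕ) : ℝ :=
  ∑ u ∈ words X n, sSup (f n '' cylinder X u)

/-- The topological pressure `P(F) = limsup (1/n) log Z_n(F)`. -/
noncomputable def pressure (X : Set (Pt k)) (f : ℕ → Pt k → ℝ) : ℝ :=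
  Filter.limsup (fun n : ℕ => Real.log (Zn X f n) / n) atTop

/-- Condition (C2): quasi-multiplicativity. -/
def QuasiMult (X : Set (Pt k)) (f : ℕ → Pt k → ℝ) : Prop :=
  ∃ k₀ : ℕ, ∃ D : ℝ, 0 < D ∧ D < 1 ∧
    ∀ (m n : ℕ) (u : Fin m → Fin k) (v : Fin n → Fin k),
      Allowable X u → Allowable X v →
      ∃ i, i ≤ k₀ ∧ ∃ w : Fin i → Fin k,
        Allowable X (Fin.append (Fin.append u w) v) ∧
        D * sSup (f m '' cylinder X u) * sSup (f n '' cylinder X v) ≤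
          sSup (f (m + i + n) '' cylinder X (Fin.append (Fin.append u w) v))

/-- Strong specification property with specification number `s`. -/
def StrongSpec (X : Set (Pt k)) (s : ℕ) : Prop :=
  ∀ (m n : ℕ) (u : Fin m → Fin k) (v : Fin n → Fin k),
    Allowable X u → Allowable X v →
    ∃ w : Fin s → Fin k, Allowable X (Fin.append (Fin.append u w) v)

/-- Irreducibility of a subshift. -/
def IrreducibleShift (X : Set (Pt k)) : Prop :=
  ∀ (m n : ℕ) (u : Fin m → Fin k) (v : Fin n → Fin k),
    Allowable X u → Allowable X v →
    ∃ (l : ℕ) (w : Fin l → Fin k), Allowable X (Fin.append (Fin.append u w) v)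

/-- The `n`-th partition entropy of `μ`. -/
noncomputable def Hn (X : Set (Pt k)) (μ : Measure (Pt k)) (n : ℕ) : ℝ :=
  -∑ u ∈ words X n, (μ (cylinder X u)).toReal * Real.log (μ (cylinder X u)).toReal

/-- Measure-theoretic entropy of an invariant measure on a subshift. -/
noncomputable def entropy (X : Set (Pt k)) (μ : Measure (Pt k)) : ℝ :=
  ⨅ n : ℕ, Hn X μ (n + 1) / (n + 1)

/-- The key partition-sum bound appearing in Lemma 2.2. -/
def KeyBound (X : Set (Pt k)) (f : ℕ → Pt k → ℝ) (C P : ℝ) : Prop :=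
  ∀ n : ℕ, 0 < n → ∀ z : (Fin n → Fin k) → Pt k,
    (∀ u ∈ words X n, z u ∈ cylinder X u) →
    1 / C ≤ Real.exp ((n : ℝ) * P) / (∑ u ∈ words X n, f n (z u)) ∧
    Real.exp ((n : ℝ) * P) / (∑ u ∈ words X n, f n (z u)) ≤ C


/-! ### Auxiliary lemmas -/

section Aux

variable {X : Set (Pt k)} {f : ℕ → Pt k → ℝ}

lemma shift_iterate_apply (x : Pt k) (m n : ℕ) : shift^[m] x n = x (n + m) := by
  induction m generalizing x n with
  | zero => rfl
  | succ m ih =>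
    rw [Function.iterate_succ_apply]
    rw [ih (shift x) n]; rfl

lemma mem_X_of_mem_cylinder {n : ℕ} {u : Fin n → Fin k} {x : Pt k}
    (hx : x ∈ cylinder X u) : x ∈ X := hx.1

lemma shift_iter_mem (hX : IsSubshift X) {x : Pt k} (hx : x ∈ X) (m : ℕ) :
    shift^[m] x ∈ X := by
  induction m with
  | zero => exact hx
  | succ m ih => rw [Function.iterate_succ_apply']; exact hX.2 _ ih

lemma mem_words_iff {n : ℕ} {u : Fin n → Fin k} : u ∈ words X n ↔ Allowable X u := by
  simp [words]

lemma mem_Fext_iff {m n : ℕ} {u : Fin m → Fin k} {v : Fin n → Fin k} :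
    v ∈ Fext X u n ↔ Allowable X (Fin.append u v) := by
  simp [Fext]

lemma mem_cylinder_prefix {n : ℕ} {x : Pt k} (hx : x ∈ X) :
    x ∈ cylinder X (fun i : Fin n => x (i : ℕ)) := ⟨hx, fun _ => rfl⟩

lemma prefix_mem_words {n : ℕ} {x : Pt k} (hx : x ∈ X) :
    (fun i : Fin n => x (i : ℕ)) ∈ words X n :=
  mem_words_iff.2 ⟨x, mem_cylinder_prefix hx⟩

lemma mem_cylinder_of_append {m n : ℕ} {u : Fin m → Fin k} {v : Fin n → Fin k} {x : Pt k}
    (hx : x ∈ cylinder X (Fin.append u v)) : x ∈ cylinder X u := by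
  refine ⟨hx.1, fun i => ?_⟩
  have := hx.2 (Fin.castAdd n i)
  rwa [Fin.append_left, Fin.coe_castAdd] at this

lemma shift_mem_cylinder_of_append (hX : IsSubshift X)
    {m n : ℕ} {u : Fin m → Fin k} {v : Fin n → Fin k} {x : Pt k}
    (hx : x ∈ cylinder X (Fin.append u v)) : shift^[m] x ∈ cylinder X v := by
  refine ⟨shift_iter_mem hX hx.1 m, fun i => ?_⟩
  have := hx.2 (Fin.natAdd m i)
  rw [Fin.append_right, Fin.coe_natAdd] at this
  rw [shift_iterate_apply]
  rw [← this]
  congr 1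
  omega

lemma agree_of_mem_cylinder {n : ℕ} {u : Fin n → Fin k} {x y : Pt k}
    (hx : x ∈ cylinder X u) (hy : y ∈ cylinder X u) : ∀ i < n, x i = y i := by
  intro i hi
  have h1 := hx.2 ⟨i, hi⟩
  have h2 := hy.2 ⟨i, hi⟩
  simp only at h1 h2
  rw [h1, h2]

lemma bddvar_le {M : ℝ} (hf : GoodSeq X f) (hM : BddVarWith X f M) {n : ℕ}
    {u : Fin n → Fin k} {x y : Pt k}
    (hx : x ∈ cylinder X u) (hy : y ∈ cylinder X u) : f n x ≤ M * f n y := by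
  have h := hM.2 n x hx.1 y hy.1 (agree_of_mem_cylinder hx hy)
  have hy0 : 0 < f n y := (hf n).2 y hy.1
  rw [div_le_iff₀ hy0] at h
  linarith

/-- Extending a point's membership: if `x ∈ [u]` then `x` lies in the cylinder of
`u` appended with the next `N` coordinates of `x`. -/
lemma mem_cylinder_append_self {m : ℕ} {u : Fin m → Fin k} {x : Pt k}
    (hx : x ∈ cylinder X u) (N : ℕ) :
    x ∈ cylinder X (Fin.append u (fun j : Fin N => x (m + (j : ℕ)))) := by
  refine ⟨hx.1, fun i => ?_⟩
  induction i using Fin.addCases with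
  | left i => rw [Fin.append_left, Fin.coe_castAdd]; exact hx.2 i
  | right i => rw [Fin.append_right, Fin.coe_natAdd]

lemma ext_mem_Fext {m : ℕ} {u : Fin m → Fin k} {x : Pt k}
    (hx : x ∈ cylinder X u) (N : ℕ) :
    (fun j : Fin N => x (m + (j : ℕ))) ∈ Fext X u N :=
  mem_Fext_iff.2 ⟨x, mem_cylinder_append_self hx N⟩

end Aux

section Aux2

variable {X : Set (Pt k)} {f : ℕ → Pt k → ℝ}

/-- A choice of a point in each allowable cylinder, with fallback `x₀`. -/
noncomputable def pick (X : Set (Pt k)) (x₀ : Pt k) {n : ℕ} (u : Fin n → Fin k) : Pt k :=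
  if h : Allowable X u then h.choose else x₀

lemma pick_mem {x₀ : Pt k} {n : ℕ} {u : Fin n → Fin k} (h : Allowable X u) :
    pick X x₀ u ∈ cylinder X u := by
  rw [pick, dif_pos h]; exact h.choose_spec

lemma pick_mem_X {x₀ : Pt k} {n : ℕ} {u : Fin n → Fin k} (h : Allowable X u) :
    pick X x₀ u ∈ X := (pick_mem h).1

lemma X_isCompact (hX : IsSubshift X) : IsCompact X := hX.1.isCompact

/-- positive lower bound for `f n` on a nonempty compact `X`. -/
lemma exists_min (hX : IsSubshift X) (hf : GoodSeq X f) (hne : X.Nonempty) (n : ℕ) :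
    ∃ δ : ℝ, 0 < δ ∧ ∀ x ∈ X, δ ≤ f n x := by
  obtain ⟨x, hx, hmin⟩ := (X_isCompact hX).exists_isMinOn hne (hf n).1
  exact ⟨f n x, (hf n).2 x hx, fun y hy => hmin hy⟩

lemma exists_max (hX : IsSubshift X) (hf : GoodSeq X f) (hne : X.Nonempty) (n : ℕ) :
    ∃ S : ℝ, 0 < S ∧ ∀ x ∈ X, f n x ≤ S := by
  obtain ⟨x, hx, hmax⟩ := (X_isCompact hX).exists_isMaxOn hne (hf n).1
  exact ⟨f n x, (hf n).2 x hx, fun y hy => hmax hy⟩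

lemma sum_pos_words (hf : GoodSeq X f) (hne : X.Nonempty) {n : ℕ}
    {z : (Fin n → Fin k) → Pt k} (hz : ∀ w ∈ words X n, z w ∈ cylinder X w) :
    0 < ∑ w ∈ words X n, f n (z w) := by
  obtain ⟨x₀, hx₀⟩ := hne
  refine Finset.sum_pos' (fun w hw => le_of_lt ((hf n).2 _ (hz w hw).1)) ?_
  refine ⟨_, prefix_mem_words (n := n) hx₀, (hf n).2 _ (hz _ (prefix_mem_words hx₀)).1⟩

/-- Sum over an injection. -/
lemma sum_le_sum_inj {α β : Type*} [DecidableEq β] (s : Finset α) (t : Finset β)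
    (φ : α → β) (hφ : ∀ a ∈ s, φ a ∈ t)
    (hinj : ∀ a ∈ s, ∀ b ∈ s, φ a = φ b → a = b)
    (g : β → ℝ) (hg : ∀ b ∈ t, 0 ≤ g b) :
    ∑ a ∈ s, g (φ a) ≤ ∑ b ∈ t, g b := by
  rw [← Finset.sum_image hinj]
  exact Finset.sum_le_sum_of_subset_of_nonneg
    (fun b hb => by obtain ⟨a, ha, rfl⟩ := Finset.mem_image.1 hb; exact hφ a ha)
    (fun b hb _ => hg b hb)

lemma append_take_drop {n d : ℕ} (w : Fin (n + d) → Fin k) :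
    Fin.append (fun i : Fin n => w (Fin.castAdd d i)) (fun j : Fin d => w (Fin.natAdd n j)) = w := by
  funext i
  induction i using Fin.addCases with
  | left i => rw [Fin.append_left]
  | right i => rw [Fin.append_right]

/-- Splitting the sum over allowable words of length `n + d`. -/
lemma sum_words_split (X : Set (Pt k)) (n d : ℕ) (g : (Fin (n + d) → Fin k) → ℝ) :
    ∑ w ∈ words X (n + d), g w
      = ∑ p ∈ words X n, ∑ s ∈ Fext X p d, g (Fin.append p s) := by
  rw [← Finset.sum_sigma (words X n) (fun p => Fext X p d)
    (fun q => g (Fin.append q.1 q.2))]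
  refine Finset.sum_bij' (fun w _ => (⟨fun i => w (Fin.castAdd d i), fun j => w (Fin.natAdd n j)⟩ :
      Σ _ : Fin n → Fin k, Fin d → Fin k)) (fun q _ => Fin.append q.1 q.2) ?_ ?_ ?_ ?_ ?_
  · intro w hw
    rw [mem_words_iff] at hw
    rw [Finset.mem_sigma]
    constructor
    · rw [mem_words_iff]
      obtain ⟨x, hx⟩ := hw
      rw [← append_take_drop w] at hx
      exact ⟨x, mem_cylinder_of_append hx⟩
    · rw [mem_Fext_iff, append_take_drop]
      exact hw
  · intro q hq
    rw [Finset.mem_sigma] at hq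
    rw [mem_words_iff]
    exact mem_Fext_iff.1 hq.2
  · intro w hw
    exact append_take_drop w
  · intro q hq
    rcases q with ⟨p, s⟩
    show (⟨fun i => Fin.append p s (Fin.castAdd d i), fun j => Fin.append p s (Fin.natAdd n j)⟩ :
      Σ _ : Fin n → Fin k, Fin d → Fin k) = ⟨p, s⟩
    congr 1
    · funext i; rw [Fin.append_left]
    · funext j; rw [Fin.append_right]
  · intro w hw
    exact (congrArg g (append_take_drop w)).symm

end Aux2

section Main

variable {X : Set (Pt k)} {f : ℕ → Pt k → ℝ}

lemma bddvar_of_rb (hX : IsSubshift X) (hf : GoodSeq X f) (hne : X.Nonempty)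
    {C : ℝ} {K : ℕ} (hC : 1 ≤ C) (hRB : RightBalancedWith X f C K) :
    ∃ M, BddVarWith X f M := by
  obtain ⟨x₀, hx₀⟩ := hne
  obtain ⟨δ₀, hδ₀, hδ₀f⟩ := exists_min hX hf ⟨x₀, hx₀⟩ 0
  obtain ⟨S₀, hS₀, hS₀f⟩ := exists_max hX hf ⟨x₀, hx₀⟩ 0
  have hC0 : (0:ℝ) < C := lt_of_lt_of_le one_pos hC
  refine ⟨max (max (S₀ / δ₀) (C ^ 2)) 1, le_max_right _ _, ?_⟩
  set M := max (max (S₀ / δ₀) (C ^ 2)) 1 with hM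
  have hM0 : (0:ℝ) < M := lt_of_lt_of_le one_pos (le_max_right _ _)
  intro n x hx y hy hagree
  have hfy : 0 < f n y := (hf n).2 y hy
  have hfx : 0 < f n x := (hf n).2 x hx
  rw [div_le_iff₀ hfy]
  rcases Nat.eq_zero_or_pos n with hn | hn
  · subst hn
    have h1 : f 0 x ≤ S₀ := hS₀f x hx
    have h2 : δ₀ ≤ f 0 y := hδ₀f y hy
    have h3 : S₀ / δ₀ ≤ M := le_trans (le_max_left _ _) (le_max_left _ _)
    rw [div_le_iff₀ hδ₀] at h3
    nlinarith
  · set u : Fin n → Fin k := fun i => x (i : ℕ) with hu_def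
    have hu : u ∈ words X n := prefix_mem_words hx
    have hxcyl : x ∈ cylinder X u := mem_cylinder_prefix hx
    have hycyl : y ∈ cylinder X u := ⟨hy, fun i => (hagree i i.2).symm⟩
    set Y : (Fin K → Fin k) → Pt k := fun v => pick X x₀ (Fin.append u v) with hY_def
    have hY : ∀ v ∈ Fext X u K, Y v ∈ cylinder X (Fin.append u v) :=
      fun v hv => pick_mem (mem_Fext_iff.1 hv)
    set Z : (Fin K → Fin k) → Pt k := fun w => pick X x₀ w with hZ_def
    have hZ : ∀ w ∈ words X K, Z w ∈ cylinder X w :=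
      fun w hw => pick_mem (mem_words_iff.1 hw)
    have h1 := hRB n K hn le_rfl u hu x hxcyl Y hY Z hZ
    have h2 := hRB n K hn le_rfl u hu y hycyl Y hY Z hZ
    set S := ∑ v ∈ Fext X u K, f (n + K) (Y v) with hS_def
    set T := ∑ w ∈ words X K, f K (Z w) with hT_def
    have hT : 0 < T := sum_pos_words hf ⟨x₀, hx₀⟩ hZ
    have hDx : 0 < f n x * T := mul_pos hfx hT
    have hDy : 0 < f n y * T := mul_pos hfy hT
    have e1 : 1 * (f n x * T) ≤ S * C := (div_le_div_iff₀ hC0 hDx).1 h1.1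
    have e2 : S ≤ C * (f n y * T) := (div_le_iff₀ hDy).1 h2.2
    have e3 : f n x * T ≤ C ^ 2 * f n y * T := by nlinarith
    have e4 : f n x ≤ C ^ 2 * f n y := le_of_mul_le_mul_right (by linarith) hT
    have h3 : C ^ 2 ≤ M := le_trans (le_max_right _ _) (le_max_left _ _)
    nlinarith

end Main

section Main2

variable {X : Set (Pt k)} {f : ℕ → Pt k → ℝ}

lemma cylinder_append_coord {m n : ℕ} {u : Fin m → Fin k} {v : Fin n → Fin k} {x : Pt k}
    (hx : x ∈ cylinder X (Fin.append u v)) (j : Fin n) : x (m + (j : ℕ)) = v j := by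
  have := hx.2 (Fin.natAdd m j)
  rwa [Fin.append_right, Fin.coe_natAdd] at this

lemma c1_of_rb (hX : IsSubshift X) (hf : GoodSeq X f) {x₀ : Pt k} (hx₀ : x₀ ∈ X)
    {Cs : ℝ} (hsup : SuperaddWith X f Cs) {M : ℝ} (hM : BddVarWith X f M)
    {C : ℝ} {K : ℕ} (hC : 1 ≤ C) (hRB : RightBalancedWith X f C K) (k₀ : ℕ) :
    ∃ C₁ : ℝ, 1 ≤ C₁ ∧
      ∀ m n : ℕ, 0 < m → 0 < n → ∀ u : Fin m → Fin k, u ∈ words X m →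
        ∀ xu ∈ cylinder X u,
        ∀ y : (Fin (n + k₀) → Fin k) → Pt k,
          (∀ v ∈ Fext X u (n + k₀), y v ∈ cylinder X (Fin.append u v)) →
        ∀ z : (Fin n → Fin k) → Pt k,
          (∀ w ∈ words X n, z w ∈ cylinder X w) →
          (∑ v ∈ Fext X u (n + k₀), f (m + n + k₀) (y v)) ≤
            C₁ * (f m xu * ∑ w ∈ words X n, f n (z w)) := by
  obtain ⟨δK, hδK, hδKf⟩ := exists_min hX hf ⟨x₀, hx₀⟩ K
  have hM1 : 1 ≤ M := hM.1
  have hC0 : (0:ℝ) < C := lt_of_lt_of_le one_pos hC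
  set d : ℕ := k₀ + K with hd
  set E : ℝ := ∑ w ∈ words X d, f d (pick X x₀ w) with hE
  have hE0 : 0 < E := sum_pos_words hf ⟨x₀, hx₀⟩ (fun w hw => pick_mem (mem_words_iff.1 hw))
  set A : ℝ := M ^ 2 * Real.exp Cs / δK with hA
  have hA0 : 0 < A := by positivity
  refine ⟨max 1 (A * C * (C * E)), le_max_left _ _, ?_⟩
  intro m n hm hn u hu xu hxu y hy z hz
  have hidx : m + n + k₀ = m + (n + k₀) := by omega
  rw [hidx]
  -- the choice families
  set Y : (Fin (n + d) → Fin k) → Pt k := fun v' => pick X x₀ (Fin.append u v') with hYdef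
  have hY : ∀ v' ∈ Fext X u (n + d), Y v' ∈ cylinder X (Fin.append u v') :=
    fun v' hv' => pick_mem (mem_Fext_iff.1 hv')
  set Z : (Fin (n + d) → Fin k) → Pt k := fun w => pick X x₀ w with hZdef
  have hZ : ∀ w ∈ words X (n + d), Z w ∈ cylinder X w :=
    fun w hw => pick_mem (mem_words_iff.1 hw)
  set Zd : (Fin d → Fin k) → Pt k := fun w => pick X x₀ w with hZddef
  have hZd : ∀ w ∈ words X d, Zd w ∈ cylinder X w :=
    fun w hw => pick_mem (mem_words_iff.1 hw)
  -- the extension map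
  set pt : (Fin (n + k₀) → Fin k) → Pt k := fun v => pick X x₀ (Fin.append u v) with hptdef
  set φ : (Fin (n + k₀) → Fin k) → (Fin (n + d) → Fin k) :=
    fun v j => pt v (m + (j : ℕ)) with hφdef
  have hptmem : ∀ v ∈ Fext X u (n + k₀), pt v ∈ cylinder X (Fin.append u v) :=
    fun v hv => pick_mem (mem_Fext_iff.1 hv)
  have hφmem : ∀ v ∈ Fext X u (n + k₀), φ v ∈ Fext X u (n + d) := by
    intro v hv
    exact ext_mem_Fext (mem_cylinder_of_append (hptmem v hv)) (n + d)
  have hφval : ∀ v ∈ Fext X u (n + k₀), ∀ j : Fin (n + k₀),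
      φ v ⟨(j : ℕ), by omega⟩ = v j := by
    intro v hv j
    show pt v (m + (j : ℕ)) = v j
    exact cylinder_append_coord (hptmem v hv) j
  have hφinj : ∀ v ∈ Fext X u (n + k₀), ∀ v' ∈ Fext X u (n + k₀), φ v = φ v' → v = v' := by
    intro v hv v' hv' he
    funext j
    rw [← hφval v hv j, ← hφval v' hv' j, he]
  -- per-term bound (Step A)
  have key : ∀ v ∈ Fext X u (n + k₀),
      f (m + (n + k₀)) (y v) ≤ A * f (m + (n + d)) (Y (φ v)) := by
    intro v hv
    have hyv := hy v hv
    have hptv := hptmem v hv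
    have hptX : pt v ∈ X := hptv.1
    have c1 : f (m + (n + k₀)) (y v) ≤ M * f (m + (n + k₀)) (pt v) := bddvar_le hf hM hyv hptv
    have c2 := hsup.2 (pt v) hptX (m + (n + k₀)) K
    have c3 : δK ≤ f K (shift^[m + (n + k₀)] (pt v)) := hδKf _ (shift_iter_mem hX hptX _)
    have hidx2 : m + (n + k₀) + K = m + (n + d) := by omega
    rw [hidx2] at c2
    have hptcyl2 : pt v ∈ cylinder X (Fin.append u (φ v)) :=
      mem_cylinder_append_self (mem_cylinder_of_append hptv) (n + d)
    have hYcyl : Y (φ v) ∈ cylinder X (Fin.append u (φ v)) := hY _ (hφmem v hv)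
    have c4 : f (m + (n + d)) (pt v) ≤ M * f (m + (n + d)) (Y (φ v)) :=
      bddvar_le hf hM hptcyl2 hYcyl
    have p1 : 0 < f (m + (n + k₀)) (pt v) := (hf _).2 _ hptX
    have p2 : 0 < f (m + (n + d)) (pt v) := (hf _).2 _ hptX
    have p3 : 0 < f K (shift^[m + (n + k₀)] (pt v)) := (hf _).2 _ (shift_iter_mem hX hptX _)
    have p4 : 0 < f (m + (n + d)) (Y (φ v)) := (hf _).2 _ hYcyl.1
    have hexp : 0 < Real.exp (-Cs) := Real.exp_pos _
    have c5 : f (m + (n + k₀)) (pt v) * δK ≤ Real.exp Cs * f (m + (n + d)) (pt v) := by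
      have h := mul_le_mul_of_nonneg_left c2 (le_of_lt (Real.exp_pos Cs))
      rw [← mul_assoc, ← Real.exp_add, add_neg_cancel, Real.exp_zero, one_mul] at h
      nlinarith
    have hM0 : (0:ℝ) < M := lt_of_lt_of_le one_pos hM1
    rw [hA, div_mul_eq_mul_div, le_div_iff₀ hδK]
    calc f (m + (n + k₀)) (y v) * δK
        ≤ (M * f (m + (n + k₀)) (pt v)) * δK := mul_le_mul_of_nonneg_right c1 hδK.le
      _ = M * (f (m + (n + k₀)) (pt v) * δK) := by ring
      _ ≤ M * (Real.exp Cs * f (m + (n + d)) (pt v)) := mul_le_mul_of_nonneg_left c5 hM0.le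
      _ = (M * Real.exp Cs) * f (m + (n + d)) (pt v) := by ring
      _ ≤ (M * Real.exp Cs) * (M * f (m + (n + d)) (Y (φ v))) :=
          mul_le_mul_of_nonneg_left c4 (by positivity)
      _ = M ^ 2 * Real.exp Cs * f (m + (n + d)) (Y (φ v)) := by ring
  -- Step A: compare with length n + d extension sum
  have stepA : (∑ v ∈ Fext X u (n + k₀), f (m + (n + k₀)) (y v)) ≤
      A * ∑ v' ∈ Fext X u (n + d), f (m + (n + d)) (Y v') := by
    calc (∑ v ∈ Fext X u (n + k₀), f (m + (n + k₀)) (y v))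
        ≤ ∑ v ∈ Fext X u (n + k₀), A * f (m + (n + d)) (Y (φ v)) := Finset.sum_le_sum key
      _ = A * ∑ v ∈ Fext X u (n + k₀), f (m + (n + d)) (Y (φ v)) := by rw [Finset.mul_sum]
      _ ≤ A * ∑ v' ∈ Fext X u (n + d), f (m + (n + d)) (Y v') := by
          refine mul_le_mul_of_nonneg_left ?_ (le_of_lt hA0)
          refine sum_le_sum_inj _ _ φ hφmem hφinj (fun v' => f (m + (n + d)) (Y v')) ?_
          intro v' hv'
          exact le_of_lt ((hf _).2 _ (hY v' hv').1)
  -- Step B: right balancedness at (m, n + d)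
  have hKnd : K ≤ n + d := by omega
  have hB := hRB m (n + d) hm hKnd u hu xu hxu Y hY Z hZ
  have hfxu : 0 < f m xu := (hf m).2 xu hxu.1
  have hTN : 0 < ∑ w ∈ words X (n + d), f (n + d) (Z w) := sum_pos_words hf ⟨x₀, hx₀⟩ hZ
  have hDN : 0 < f m xu * ∑ w ∈ words X (n + d), f (n + d) (Z w) := mul_pos hfxu hTN
  have stepB : (∑ v' ∈ Fext X u (n + d), f (m + (n + d)) (Y v')) ≤
      C * (f m xu * ∑ w ∈ words X (n + d), f (n + d) (Z w)) := (div_le_iff₀ hDN).1 hB.2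
  -- Step C: splitting the length-(n+d) partition sum
  have stepC : (∑ w ∈ words X (n + d), f (n + d) (Z w)) ≤
      C * E * ∑ p ∈ words X n, f n (z p) := by
    rw [sum_words_split X n d (fun w => f (n + d) (Z w))]
    have inner : ∀ p ∈ words X n,
        (∑ s ∈ Fext X p d, f (n + d) (Z (Fin.append p s))) ≤ C * E * f n (z p) := by
      intro p hp
      have hzp := hz p hp
      have hKd : K ≤ d := by omega
      have hYp : ∀ s ∈ Fext X p d, Z (Fin.append p s) ∈ cylinder X (Fin.append p s) :=
        fun s hs => pick_mem (mem_Fext_iff.1 hs)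
      have hB2 := hRB n d hn hKd p hp (z p) hzp (fun s => Z (Fin.append p s)) hYp Zd hZd
      have hfzp : 0 < f n (z p) := (hf n).2 _ hzp.1
      have hD2 : 0 < f n (z p) * E := mul_pos hfzp hE0
      have := (div_le_iff₀ hD2).1 hB2.2
      calc (∑ s ∈ Fext X p d, f (n + d) (Z (Fin.append p s))) ≤ C * (f n (z p) * E) := this
        _ = C * E * f n (z p) := by ring
    calc (∑ p ∈ words X n, ∑ s ∈ Fext X p d, f (n + d) (Z (Fin.append p s)))
        ≤ ∑ p ∈ words X n, C * E * f n (z p) := Finset.sum_le_sum inner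
      _ = C * E * ∑ p ∈ words X n, f n (z p) := (Finset.mul_sum _ _ _).symm
  -- combine
  have hTgoal : 0 ≤ ∑ w ∈ words X n, f n (z w) :=
    Finset.sum_nonneg fun w hw => le_of_lt ((hf n).2 _ (hz w hw).1)
  have final : (∑ v ∈ Fext X u (n + k₀), f (m + (n + k₀)) (y v)) ≤
      A * C * (C * E) * (f m xu * ∑ w ∈ words X n, f n (z w)) := by
    calc (∑ v ∈ Fext X u (n + k₀), f (m + (n + k₀)) (y v))
        ≤ A * ∑ v' ∈ Fext X u (n + d), f (m + (n + d)) (Y v') := stepA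
      _ ≤ A * (C * (f m xu * ∑ w ∈ words X (n + d), f (n + d) (Z w))) :=
          mul_le_mul_of_nonneg_left stepB (le_of_lt hA0)
      _ ≤ A * (C * (f m xu * (C * E * ∑ p ∈ words X n, f n (z p)))) := by
          refine mul_le_mul_of_nonneg_left ?_ (le_of_lt hA0)
          refine mul_le_mul_of_nonneg_left ?_ (le_of_lt hC0)
          exact mul_le_mul_of_nonneg_left stepC (le_of_lt hfxu)
      _ = A * C * (C * E) * (f m xu * ∑ p ∈ words X n, f n (z p)) := by ring
  refine le_trans final ?_
  refine mul_le_mul_of_nonneg_right (le_max_right _ _) ?_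
  exact mul_nonneg (le_of_lt hfxu) hTgoal

end Main2

section Main3

variable {X : Set (Pt k)} {f : ℕ → Pt k → ℝ}

lemma exp_neg_le {Cs t s : ℝ} (h : Real.exp (-Cs) * t ≤ s) : t ≤ Real.exp Cs * s := by
  have h2 := mul_le_mul_of_nonneg_left h (Real.exp_pos Cs).le
  rwa [← mul_assoc, ← Real.exp_add, add_neg_cancel, Real.exp_zero, one_mul] at h2

/-- Reverse direction, upper bound. -/
lemma rev_upper (hX : IsSubshift X) (hf : GoodSeq X f) {x₀ : Pt k} (hx₀ : x₀ ∈ X)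
    {Cs : ℝ} (hsup : SuperaddWith X f Cs) {M : ℝ} (hM : BddVarWith X f M)
    {k₀ : ℕ} {δk : ℝ} (hδk : 0 < δk) (hδkf : ∀ x ∈ X, δk ≤ f k₀ x)
    {C₁ : ℝ} (hC₁ : 1 ≤ C₁)
    (hB : ∀ m n : ℕ, 0 < m → 0 < n → ∀ u : Fin m → Fin k, u ∈ words X m →
          ∀ xu ∈ cylinder X u,
          ∀ y : (Fin (n + k₀) → Fin k) → Pt k,
            (∀ v ∈ Fext X u (n + k₀), y v ∈ cylinder X (Fin.append u v)) →
          ∀ z : (Fin n → Fin k) → Pt k,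
            (∀ w ∈ words X n, z w ∈ cylinder X w) →
            (∑ v ∈ Fext X u (n + k₀), f (m + n + k₀) (y v)) ≤
              C₁ * (f m xu * ∑ w ∈ words X n, f n (z w))) :
    ∀ m n' : ℕ, 0 < m → 0 < n' → ∀ u : Fin m → Fin k, u ∈ words X m →
      ∀ xu ∈ cylinder X u,
      ∀ y : (Fin (n' + k₀) → Fin k) → Pt k,
        (∀ v ∈ Fext X u (n' + k₀), y v ∈ cylinder X (Fin.append u v)) →
      ∀ z : (Fin (n' + k₀) → Fin k) → Pt k,
        (∀ w ∈ words X (n' + k₀), z w ∈ cylinder X w) →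
        (∑ v ∈ Fext X u (n' + k₀), f (m + (n' + k₀)) (y v)) ≤
          (C₁ * (M * Real.exp Cs / δk)) *
            (f m xu * ∑ w ∈ words X (n' + k₀), f (n' + k₀) (z w)) := by
  intro m n' hm hn' u hu xu hxu y hy z hz
  have hM1 : 1 ≤ M := hM.1
  have hM0 : (0:ℝ) < M := lt_of_lt_of_le one_pos hM1
  set ζ : (Fin n' → Fin k) → Pt k := fun w => pick X x₀ w with hζdef
  have hζ : ∀ w ∈ words X n', ζ w ∈ cylinder X w := fun w hw => pick_mem (mem_words_iff.1 hw)
  have h1 := hB m n' hm hn' u hu xu hxu y hy ζ hζ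
  have hidx : m + (n' + k₀) = m + n' + k₀ := by omega
  rw [hidx]
  -- compare the two partition sums via the extension injection
  set ψ : (Fin n' → Fin k) → (Fin (n' + k₀) → Fin k) := fun w j => ζ w (j : ℕ) with hψdef
  have hψmem : ∀ w ∈ words X n', ψ w ∈ words X (n' + k₀) := by
    intro w hw
    exact mem_words_iff.2 ⟨ζ w, mem_cylinder_prefix (hζ w hw).1⟩
  have hψval : ∀ w ∈ words X n', ∀ i : Fin n', ψ w ⟨(i : ℕ), by omega⟩ = w i := by
    intro w hw i
    exact (hζ w hw).2 i
  have hψinj : ∀ w ∈ words X n', ∀ w' ∈ words X n', ψ w = ψ w' → w = w' := by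
    intro w hw w' hw' he
    funext i
    rw [← hψval w hw i, ← hψval w' hw' i, he]
  have key : ∀ w ∈ words X n',
      f n' (ζ w) ≤ (M * Real.exp Cs / δk) * f (n' + k₀) (z (ψ w)) := by
    intro w hw
    have hζX : ζ w ∈ X := (hζ w hw).1
    have b1 := exp_neg_le (hsup.2 (ζ w) hζX n' k₀)
    have b2 : δk ≤ f k₀ (shift^[n'] (ζ w)) := hδkf _ (shift_iter_mem hX hζX _)
    have hζcyl : ζ w ∈ cylinder X (ψ w) := mem_cylinder_prefix hζX
    have b3 : f (n' + k₀) (ζ w) ≤ M * f (n' + k₀) (z (ψ w)) :=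
      bddvar_le hf hM hζcyl (hz _ (hψmem w hw))
    have p1 : 0 < f n' (ζ w) := (hf n').2 _ hζX
    have p2 : 0 < f (n' + k₀) (ζ w) := (hf _).2 _ hζX
    have p3 : 0 < f k₀ (shift^[n'] (ζ w)) := (hf _).2 _ (shift_iter_mem hX hζX _)
    have p4 : 0 < f (n' + k₀) (z (ψ w)) := (hf _).2 _ (hz _ (hψmem w hw)).1
    rw [div_mul_eq_mul_div, le_div_iff₀ hδk]
    calc f n' (ζ w) * δk ≤ f n' (ζ w) * f k₀ (shift^[n'] (ζ w)) :=
          mul_le_mul_of_nonneg_left b2 p1.le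
      _ ≤ Real.exp Cs * f (n' + k₀) (ζ w) := b1
      _ ≤ Real.exp Cs * (M * f (n' + k₀) (z (ψ w))) :=
          mul_le_mul_of_nonneg_left b3 (Real.exp_pos Cs).le
      _ = M * Real.exp Cs * f (n' + k₀) (z (ψ w)) := by ring
  have step2 : (∑ w ∈ words X n', f n' (ζ w)) ≤
      (M * Real.exp Cs / δk) * ∑ w ∈ words X (n' + k₀), f (n' + k₀) (z w) := by
    calc (∑ w ∈ words X n', f n' (ζ w))
        ≤ ∑ w ∈ words X n', (M * Real.exp Cs / δk) * f (n' + k₀) (z (ψ w)) :=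
          Finset.sum_le_sum key
      _ = (M * Real.exp Cs / δk) * ∑ w ∈ words X n', f (n' + k₀) (z (ψ w)) :=
          (Finset.mul_sum _ _ _).symm
      _ ≤ (M * Real.exp Cs / δk) * ∑ w ∈ words X (n' + k₀), f (n' + k₀) (z w) := by
          refine mul_le_mul_of_nonneg_left ?_ (by positivity)
          refine sum_le_sum_inj _ _ ψ hψmem hψinj (fun w => f (n' + k₀) (z w)) ?_
          intro w hw
          exact le_of_lt ((hf _).2 _ (hz _ hw).1)
  have hfxu : 0 < f m xu := (hf m).2 xu hxu.1
  have hC₁0 : (0:ℝ) < C₁ := lt_of_lt_of_le one_pos hC₁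
  calc (∑ v ∈ Fext X u (n' + k₀), f (m + n' + k₀) (y v))
      ≤ C₁ * (f m xu * ∑ w ∈ words X n', f n' (ζ w)) := h1
    _ ≤ C₁ * (f m xu * ((M * Real.exp Cs / δk) *
          ∑ w ∈ words X (n' + k₀), f (n' + k₀) (z w))) := by
        refine mul_le_mul_of_nonneg_left ?_ hC₁0.le
        exact mul_le_mul_of_nonneg_left step2 hfxu.le
    _ = (C₁ * (M * Real.exp Cs / δk)) *
          (f m xu * ∑ w ∈ words X (n' + k₀), f (n' + k₀) (z w)) := by ring

end Main3

section Main4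

variable {X : Set (Pt k)} {f : ℕ → Pt k → ℝ}

/-- Reverse direction, lower bound. -/
lemma rev_lower (hX : IsSubshift X) (hf : GoodSeq X f) {x₀ : Pt k} (hx₀ : x₀ ∈ X)
    {Cs : ℝ} (hsup : SuperaddWith X f Cs) {M : ℝ} (hM : BddVarWith X f M)
    {k₀ : ℕ} (hspec : StrongSpec X k₀)
    {δ1 : ℝ} (hδ1 : 0 < δ1) (hδ1f : ∀ x ∈ X, δ1 ≤ f 1 x)
    {δk : ℝ} (hδk : 0 < δk) (hδkf : ∀ x ∈ X, δk ≤ f k₀ x)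
    {S1 : ℝ} (hS1 : 0 < S1) (hS1f : ∀ x ∈ X, f 1 x ≤ S1)
    {C₁ : ℝ} (hC₁ : 1 ≤ C₁)
    (hB : ∀ m n : ℕ, 0 < m → 0 < n → ∀ u : Fin m → Fin k, u ∈ words X m →
          ∀ xu ∈ cylinder X u,
          ∀ y : (Fin (n + k₀) → Fin k) → Pt k,
            (∀ v ∈ Fext X u (n + k₀), y v ∈ cylinder X (Fin.append u v)) →
          ∀ z : (Fin n → Fin k) → Pt k,
            (∀ w ∈ words X n, z w ∈ cylinder X w) →
            (∑ v ∈ Fext X u (n + k₀), f (m + n + k₀) (y v)) ≤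
              C₁ * (f m xu * ∑ w ∈ words X n, f n (z w))) :
    ∀ m n'' : ℕ, 0 < m → 0 < n'' → ∀ u : Fin m → Fin k, u ∈ words X m →
      ∀ xu ∈ cylinder X u,
      ∀ y : (Fin (1 + (n'' + k₀)) → Fin k) → Pt k,
        (∀ v ∈ Fext X u (1 + (n'' + k₀)), y v ∈ cylinder X (Fin.append u v)) →
      ∀ z : (Fin (1 + (n'' + k₀)) → Fin k) → Pt k,
        (∀ w ∈ words X (1 + (n'' + k₀)), z w ∈ cylinder X w) →
        f m xu * (∑ w ∈ words X (1 + (n'' + k₀)), f (1 + (n'' + k₀)) (z w)) ≤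
          (((Fintype.card (Fin 1 → Fin k) : ℝ) * C₁ * S1) *
              (M ^ 3 * Real.exp Cs ^ 3 / (δ1 * δk))) *
            ∑ v ∈ Fext X u (1 + (n'' + k₀)), f (m + (1 + (n'' + k₀))) (y v) := by
  intro m n'' hm hn'' u hu xu hxu y hy z hz
  have hM1 : 1 ≤ M := hM.1
  have hM0 : (0:ℝ) < M := lt_of_lt_of_le one_pos hM1
  have hC₁0 : (0:ℝ) < C₁ := lt_of_lt_of_le one_pos hC₁
  have hfxu : 0 < f m xu := (hf m).2 xu hxu.1
  set κ : ℝ := (Fintype.card (Fin 1 → Fin k) : ℝ) with hκ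
  set T'' : ℝ := ∑ w ∈ words X n'', f n'' (pick X x₀ w) with hT''
  have hT''0 : 0 ≤ T'' :=
    Finset.sum_nonneg fun w hw => le_of_lt ((hf _).2 _ (pick_mem_X (mem_words_iff.1 hw)))
  have hidx1 : ∀ pt : Pt k, f (1 + (n'' + k₀)) pt = f (1 + n'' + k₀) pt := fun pt => by
    rw [show 1 + (n'' + k₀) = 1 + n'' + k₀ by omega]
  -- Step 1: bound the partition sum of length 1 + n'' + k₀ using `hB` with m = 1.
  have step1 : (∑ w ∈ words X (1 + (n'' + k₀)), f (1 + (n'' + k₀)) (z w)) ≤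
      κ * C₁ * S1 * T'' := by
    rw [sum_words_split X 1 (n'' + k₀) (fun w => f (1 + (n'' + k₀)) (z w))]
    have inner : ∀ a ∈ words X 1,
        (∑ v ∈ Fext X a (n'' + k₀), f (1 + (n'' + k₀)) (z (Fin.append a v))) ≤
          C₁ * (S1 * T'') := by
      intro a ha
      have ha' : Allowable X a := mem_words_iff.1 ha
      have hyz : ∀ v ∈ Fext X a (n'' + k₀),
          z (Fin.append a v) ∈ cylinder X (Fin.append a v) :=
        fun v hv => hz _ (mem_words_iff.2 (mem_Fext_iff.1 hv))
      have hpa : pick X x₀ a ∈ cylinder X a := pick_mem ha'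
      have h := hB 1 n'' one_pos hn'' a ha (pick X x₀ a) hpa
        (fun v => z (Fin.append a v)) hyz (fun w => pick X x₀ w)
        (fun w hw => pick_mem (mem_words_iff.1 hw))
      have heq : (∑ v ∈ Fext X a (n'' + k₀), f (1 + (n'' + k₀)) (z (Fin.append a v))) =
          ∑ v ∈ Fext X a (n'' + k₀), f (1 + n'' + k₀) (z (Fin.append a v)) :=
        Finset.sum_congr rfl fun v _ => hidx1 _
      rw [heq]
      refine le_trans h ?_
      have hfa : f 1 (pick X x₀ a) ≤ S1 := hS1f _ hpa.1
      have : f 1 (pick X x₀ a) * T'' ≤ S1 * T'' := mul_le_mul_of_nonneg_right hfa hT''0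
      exact mul_le_mul_of_nonneg_left this hC₁0.le
    calc (∑ a ∈ words X 1, ∑ v ∈ Fext X a (n'' + k₀), f (1 + (n'' + k₀)) (z (Fin.append a v)))
        ≤ ∑ a ∈ words X 1, C₁ * (S1 * T'') := Finset.sum_le_sum inner
      _ = ((words X 1).card : ℝ) * (C₁ * (S1 * T'')) := by
          rw [Finset.sum_const, nsmul_eq_mul]
      _ ≤ κ * (C₁ * (S1 * T'')) := by
          refine mul_le_mul_of_nonneg_right ?_ (by positivity)
          exact_mod_cast Nat.cast_le.2 (Finset.card_le_univ _)
      _ = κ * C₁ * S1 * T'' := by ring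
  -- Step 2: the specification injection.
  set ξf : (Fin n'' → Fin k) → Pt k := fun w =>
    if h : ∃ s : Fin k₀ → Fin k, Allowable X (Fin.append (Fin.append u s) w) then
      pick X x₀ (Fin.append (Fin.append u h.choose) w) else x₀ with hξf
  have hxi : ∀ w ∈ words X n'', ∃ s : Fin k₀ → Fin k,
      ξf w ∈ cylinder X (Fin.append (Fin.append u s) w) := by
    intro w hw
    have hex : ∃ s : Fin k₀ → Fin k, Allowable X (Fin.append (Fin.append u s) w) := by
      obtain ⟨s, hs⟩ := hspec m n'' u w (mem_words_iff.1 hu) (mem_words_iff.1 hw)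
      exact ⟨s, hs⟩
    refine ⟨hex.choose, ?_⟩
    rw [hξf]
    simp only [dif_pos hex]
    exact pick_mem hex.choose_spec
  set φ : (Fin n'' → Fin k) → (Fin (1 + (n'' + k₀)) → Fin k) :=
    fun w j => ξf w (m + (j : ℕ)) with hφ
  have hφmem : ∀ w ∈ words X n'', φ w ∈ Fext X u (1 + (n'' + k₀)) := by
    intro w hw
    obtain ⟨s, hs⟩ := hxi w hw
    exact ext_mem_Fext (mem_cylinder_of_append (mem_cylinder_of_append hs)) _
  have hφval : ∀ w ∈ words X n'', ∀ i : Fin n'',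
      φ w ⟨k₀ + (i : ℕ), by omega⟩ = w i := by
    intro w hw i
    obtain ⟨s, hs⟩ := hxi w hw
    show ξf w (m + (k₀ + (i : ℕ))) = w i
    rw [show m + (k₀ + (i : ℕ)) = m + k₀ + (i : ℕ) by omega]
    exact cylinder_append_coord hs i
  have hφinj : ∀ w ∈ words X n'', ∀ w' ∈ words X n'', φ w = φ w' → w = w' := by
    intro w hw w' hw' he
    funext i
    rw [← hφval w hw i, ← hφval w' hw' i, he]
  set B : ℝ := M ^ 3 * Real.exp Cs ^ 3 / (δ1 * δk) with hBdef
  have hB0 : 0 < B := by positivity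
  have key2 : ∀ w ∈ words X n'',
      f m xu * f n'' (pick X x₀ w) ≤ B * f (m + (1 + (n'' + k₀))) (y (φ w)) := by
    intro w hw
    obtain ⟨s, hs⟩ := hxi w hw
    have hξX : ξf w ∈ X := hs.1
    have hξu : ξf w ∈ cylinder X u := mem_cylinder_of_append (mem_cylinder_of_append hs)
    have b3' := hsup.2 (ξf w) hξX (m + k₀ + n'') 1
    rw [show m + k₀ + n'' + 1 = m + (1 + (n'' + k₀)) by omega] at b3'
    have b3 := exp_neg_le b3'
    have b2 := exp_neg_le (hsup.2 (ξf w) hξX (m + k₀) n'')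
    have b1 := exp_neg_le (hsup.2 (ξf w) hξX m k₀)
    have lb1 : δ1 ≤ f 1 (shift^[m + k₀ + n''] (ξf w)) := hδ1f _ (shift_iter_mem hX hξX _)
    have lbk : δk ≤ f k₀ (shift^[m] (ξf w)) := hδkf _ (shift_iter_mem hX hξX _)
    have a1 : f m xu ≤ M * f m (ξf w) := bddvar_le hf hM hxu hξu
    have hshiftw : shift^[m + k₀] (ξf w) ∈ cylinder X w := shift_mem_cylinder_of_append hX hs
    have a2 : f n'' (pick X x₀ w) ≤ M * f n'' (shift^[m + k₀] (ξf w)) :=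
      bddvar_le hf hM (pick_mem (mem_words_iff.1 hw)) hshiftw
    have hycyl : y (φ w) ∈ cylinder X (Fin.append u (φ w)) := hy _ (hφmem w hw)
    have hξφ : ξf w ∈ cylinder X (Fin.append u (φ w)) := mem_cylinder_append_self hξu _
    have a3 : f (m + (1 + (n'' + k₀))) (ξf w) ≤ M * f (m + (1 + (n'' + k₀))) (y (φ w)) :=
      bddvar_le hf hM hξφ hycyl
    have pm : 0 < f m (ξf w) := (hf _).2 _ hξX
    have pk : 0 < f k₀ (shift^[m] (ξf w)) := (hf _).2 _ (shift_iter_mem hX hξX _)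
    have pn : 0 < f n'' (shift^[m + k₀] (ξf w)) := (hf _).2 _ (shift_iter_mem hX hξX _)
    have pkm : 0 < f (m + k₀) (ξf w) := (hf _).2 _ hξX
    have pmn : 0 < f (m + k₀ + n'') (ξf w) := (hf _).2 _ hξX
    have p1s : 0 < f 1 (shift^[m + k₀ + n''] (ξf w)) := (hf _).2 _ (shift_iter_mem hX hξX _)
    have pG : 0 < f (m + (1 + (n'' + k₀))) (ξf w) := (hf _).2 _ hξX
    have pyy : 0 < f (m + (1 + (n'' + k₀))) (y (φ w)) := (hf _).2 _ hycyl.1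
    have ppick : 0 < f n'' (pick X x₀ w) := (hf _).2 _ (pick_mem_X (mem_words_iff.1 hw))
    have eCs : (0:ℝ) < Real.exp Cs := Real.exp_pos _
    -- chain of superadditivity bounds
    have c1 : f m (ξf w) * f n'' (shift^[m + k₀] (ξf w)) * (δk * δ1) ≤
        Real.exp Cs ^ 3 * f (m + (1 + (n'' + k₀))) (ξf w) := by
      calc f m (ξf w) * f n'' (shift^[m + k₀] (ξf w)) * (δk * δ1)
          = (f m (ξf w) * δk) * (f n'' (shift^[m + k₀] (ξf w)) * δ1) := by ring
        _ ≤ (f m (ξf w) * f k₀ (shift^[m] (ξf w))) * (f n'' (shift^[m + k₀] (ξf w)) * δ1) := by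
            refine mul_le_mul_of_nonneg_right ?_ (by positivity)
            exact mul_le_mul_of_nonneg_left lbk pm.le
        _ ≤ (Real.exp Cs * f (m + k₀) (ξf w)) * (f n'' (shift^[m + k₀] (ξf w)) * δ1) := by
            refine mul_le_mul_of_nonneg_right b1 (by positivity)
        _ = Real.exp Cs * ((f (m + k₀) (ξf w) * f n'' (shift^[m + k₀] (ξf w))) * δ1) := by ring
        _ ≤ Real.exp Cs * ((Real.exp Cs * f (m + k₀ + n'') (ξf w)) * δ1) := by
            refine mul_le_mul_of_nonneg_left (mul_le_mul_of_nonneg_right b2 hδ1.le) eCs.le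
        _ = Real.exp Cs ^ 2 * (f (m + k₀ + n'') (ξf w) * δ1) := by ring
        _ ≤ Real.exp Cs ^ 2 * (f (m + k₀ + n'') (ξf w) * f 1 (shift^[m + k₀ + n''] (ξf w))) := by
            refine mul_le_mul_of_nonneg_left (mul_le_mul_of_nonneg_left lb1 pmn.le) (by positivity)
        _ ≤ Real.exp Cs ^ 2 * (Real.exp Cs * f (m + (1 + (n'' + k₀))) (ξf w)) :=
            mul_le_mul_of_nonneg_left b3 (by positivity)
        _ = Real.exp Cs ^ 3 * f (m + (1 + (n'' + k₀))) (ξf w) := by ring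
    have c2 : f m xu * f n'' (pick X x₀ w) ≤
        M ^ 2 * (f m (ξf w) * f n'' (shift^[m + k₀] (ξf w))) := by
      have := mul_le_mul a1 a2 ppick.le (by positivity)
      calc f m xu * f n'' (pick X x₀ w)
          ≤ (M * f m (ξf w)) * (M * f n'' (shift^[m + k₀] (ξf w))) := this
        _ = M ^ 2 * (f m (ξf w) * f n'' (shift^[m + k₀] (ξf w))) := by ring
    rw [hBdef, div_mul_eq_mul_div, le_div_iff₀ (by positivity : (0:ℝ) < δ1 * δk)]
    calc f m xu * f n'' (pick X x₀ w) * (δ1 * δk)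
        ≤ (M ^ 2 * (f m (ξf w) * f n'' (shift^[m + k₀] (ξf w)))) * (δ1 * δk) :=
          mul_le_mul_of_nonneg_right c2 (by positivity)
      _ = M ^ 2 * (f m (ξf w) * f n'' (shift^[m + k₀] (ξf w)) * (δk * δ1)) := by ring
      _ ≤ M ^ 2 * (Real.exp Cs ^ 3 * f (m + (1 + (n'' + k₀))) (ξf w)) :=
          mul_le_mul_of_nonneg_left c1 (by positivity)
      _ ≤ M ^ 2 * (Real.exp Cs ^ 3 * (M * f (m + (1 + (n'' + k₀))) (y (φ w)))) := by
          refine mul_le_mul_of_nonneg_left (mul_le_mul_of_nonneg_left a3 (by positivity))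
            (by positivity)
      _ = M ^ 3 * Real.exp Cs ^ 3 * f (m + (1 + (n'' + k₀))) (y (φ w)) := by ring
  -- combine step 2 over the injection
  have step2 : f m xu * T'' ≤
      B * ∑ v ∈ Fext X u (1 + (n'' + k₀)), f (m + (1 + (n'' + k₀))) (y v) := by
    calc f m xu * T'' = ∑ w ∈ words X n'', f m xu * f n'' (pick X x₀ w) :=
          Finset.mul_sum _ _ _
      _ ≤ ∑ w ∈ words X n'', B * f (m + (1 + (n'' + k₀))) (y (φ w)) :=
          Finset.sum_le_sum key2
      _ = B * ∑ w ∈ words X n'', f (m + (1 + (n'' + k₀))) (y (φ w)) :=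
          (Finset.mul_sum _ _ _).symm
      _ ≤ B * ∑ v ∈ Fext X u (1 + (n'' + k₀)), f (m + (1 + (n'' + k₀))) (y v) := by
          refine mul_le_mul_of_nonneg_left ?_ hB0.le
          refine sum_le_sum_inj _ _ φ hφmem hφinj
            (fun v => f (m + (1 + (n'' + k₀))) (y v)) ?_
          intro v hv
          exact le_of_lt ((hf _).2 _ (hy v hv).1)
  -- final combination
  have hS : 0 ≤ ∑ v ∈ Fext X u (1 + (n'' + k₀)), f (m + (1 + (n'' + k₀))) (y v) :=
    Finset.sum_nonneg fun v hv => le_of_lt ((hf _).2 _ (hy v hv).1)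
  calc f m xu * (∑ w ∈ words X (1 + (n'' + k₀)), f (1 + (n'' + k₀)) (z w))
      ≤ f m xu * (κ * C₁ * S1 * T'') := mul_le_mul_of_nonneg_left step1 hfxu.le
    _ = (κ * C₁ * S1) * (f m xu * T'') := by ring
    _ ≤ (κ * C₁ * S1) * (B * ∑ v ∈ Fext X u (1 + (n'' + k₀)),
          f (m + (1 + (n'' + k₀))) (y v)) := by
        refine mul_le_mul_of_nonneg_left step2 ?_
        have hκ0 : (0:ℝ) ≤ κ := Nat.cast_nonneg _
        positivity
    _ = ((κ * C₁ * S1) * B) * ∑ v ∈ Fext X u (1 + (n'' + k₀)),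
          f (m + (1 + (n'' + k₀))) (y v) := by ring

end Main4

/-- characterization of the right balanced property for superadditive
sequences on subshifts with strong specification. -/
theorem stmt11 {k : ℕ} (k₀ : ℕ) (X : Set (Pt k)) (f : ℕ → Pt k → ℝ)
    (hX : IsSubshift X) (hf : GoodSeq X f)
    (hsup : Superadditive X f) (hspec : StrongSpec X k₀) :
    RightBalanced X f ↔
      (BddVar X f ∧ ∃ C₁ : ℝ, 1 ≤ C₁ ∧
        ∀ m n : ℕ, 0 < m → 0 < n → ∀ u : Fin m → Fin k, u ∈ words X m →
          ∀ xu ∈ cylinder X u,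
          ∀ y : (Fin (n + k₀) → Fin k) → Pt k,
            (∀ v ∈ Fext X u (n + k₀), y v ∈ cylinder X (Fin.append u v)) →
          ∀ z : (Fin n → Fin k) → Pt k,
            (∀ w ∈ words X n, z w ∈ cylinder X w) →
            (∑ v ∈ Fext X u (n + k₀), f (m + n + k₀) (y v)) ≤
              C₁ * (f m xu * ∑ w ∈ words X n, f n (z w))) := by
  obtain ⟨Cs, hsupW⟩ := hsup
  constructor
  · intro hRB
    by_cases hne : X.Nonempty
    · obtain ⟨x₀, hx₀⟩ := hne
      obtain ⟨C, hC, K, hK, hRBW⟩ := hRB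
      obtain ⟨M, hMW⟩ := bddvar_of_rb hX hf ⟨x₀, hx₀⟩ hC hRBW
      obtain ⟨C₁, hC₁, hbound⟩ := c1_of_rb hX hf hx₀ hsupW hMW hC hRBW k₀
      exact ⟨⟨M, hMW⟩, C₁, hC₁, hbound⟩
    · refine ⟨⟨1, le_rfl, fun n x hx => (hne ⟨x, hx⟩).elim⟩, 1, le_rfl, ?_⟩
      intro m n hm hn u hu
      obtain ⟨x, hx⟩ := mem_words_iff.1 hu
      exact (hne ⟨x, hx.1⟩).elim
  · rintro ⟨⟨M, hMW⟩, C₁, hC₁, hbound⟩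
    by_cases hne : X.Nonempty
    · obtain ⟨x₀, hx₀⟩ := hne
      obtain ⟨δ1, hδ1, hδ1f⟩ := exists_min hX hf ⟨x₀, hx₀⟩ 1
      obtain ⟨δk, hδk, hδkf⟩ := exists_min hX hf ⟨x₀, hx₀⟩ k₀
      obtain ⟨S1, hS1, hS1f⟩ := exists_max hX hf ⟨x₀, hx₀⟩ 1
      set Cup : ℝ := C₁ * (M * Real.exp Cs / δk) with hCup
      set Clow : ℝ := (((Fintype.card (Fin 1 → Fin k) : ℝ) * C₁ * S1) *
        (M ^ 3 * Real.exp Cs ^ 3 / (δ1 * δk))) with hClow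
      refine ⟨max 1 (max Cup Clow), le_max_left _ _, k₀ + 2, by omega, ?_⟩
      intro m n hm hn u hu xu hxu y hy z hz
      have hfxu : 0 < f m xu := (hf m).2 xu hxu.1
      have hT : 0 < ∑ w ∈ words X n, f n (z w) := sum_pos_words hf ⟨x₀, hx₀⟩ hz
      have hD : 0 < f m xu * ∑ w ∈ words X n, f n (z w) := mul_pos hfxu hT
      have hS0 : 0 ≤ ∑ v ∈ Fext X u n, f (m + n) (y v) :=
        Finset.sum_nonneg fun v hv => le_of_lt ((hf _).2 _ (hy v hv).1)
      have hCpos : (0:ℝ) < max 1 (max Cup Clow) := lt_of_lt_of_le one_pos (le_max_left _ _)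
      constructor
      · -- lower bound
        obtain ⟨n'', rfl⟩ : ∃ n'', n = 1 + (n'' + k₀) := ⟨n - k₀ - 1, by omega⟩
        have hn'' : 0 < n'' := by omega
        have hlow := rev_lower hX hf hx₀ hsupW hMW hspec hδ1 hδ1f hδk hδkf hS1 hS1f hC₁
          hbound m n'' hm hn'' u hu xu hxu y hy z hz
        rw [div_le_div_iff₀ hCpos hD]
        have hCl : Clow ≤ max 1 (max Cup Clow) :=
          le_trans (le_max_right _ _) (le_max_right _ _)
        nlinarith
      · -- upper bound
        obtain ⟨n', rfl⟩ : ∃ n', n = n' + k₀ := ⟨n - k₀, by omega⟩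
        have hn' : 0 < n' := by omega
        have hup := rev_upper hX hf hx₀ hsupW hMW hδk hδkf hC₁ hbound m n' hm hn'
          u hu xu hxu y hy z hz
        rw [div_le_iff₀ hD]
        have hCu : Cup ≤ max 1 (max Cup Clow) :=
          le_trans (le_max_left _ _) (le_max_right _ _)
        nlinarith
    · refine ⟨1, le_rfl, 1, le_rfl, ?_⟩
      intro m n hm hn u hu
      obtain ⟨x, hx⟩ := mem_words_iff.1 hu
      exact (hne ⟨x, hx.1⟩).elim

end Paper
end

section
/- Let F = {log f_n} be a superadditive sequence of positive continuous functions on a one-sided subshift X, and suppose μ is a shift-invariant Gibbs measure for F with pressure constant P. Then for every shift-invariant Borel probability measure m on X, h_m(σ_X) + lim_{n→∞} (1/n) ∫ log f_n dm ≤ P; i.e., the pressure constant of a Gibbs measure dominates the free energy of every invariant measure. -/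
open scoped Classical BigOperators
open Filter MeasureTheory

namespace Paper

variable {k : ℕ}

/-!
For a probability measure `m` on `X` write `p_u = m[u]` and `q_u = μ[u]`. The Gibbs upper
bound gives `log f_n ≤ nP + log C' + log q_u` on `[u]`, so
`H_n(m) + ∫ log f_n dm ≤ nP + log C' + ∑ p_u log q_u - ∑ p_u log p_u ≤ nP + log C'`
by Gibbs' inequality (`∑ q_u ≤ 1 = ∑ p_u`). Since `h_m ≤ H_n(m)/n`, dividing by `n` and letting
`n → ∞` gives `h_m + L ≤ P`.
-/

lemma mul_sub_log_le_sub {p q : ℝ} (hp : 0 ≤ p) (hq : 0 < q) :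
    p * (Real.log q - Real.log p) ≤ q - p := by
  rcases hp.eq_or_lt with rfl | hp
  · simpa using hq.le
  · have := Real.log_le_sub_one_of_pos (div_pos hq hp)
    rw [Real.log_div hq.ne' hp.ne'] at this
    calc p * (Real.log q - Real.log p) ≤ p * (q / p - 1) := by gcongr
      _ = q - p := by field_simp

/-- Gibbs' inequality. -/
lemma sum_mul_log_le_sum_mul_log_self {ι : Type*} (s : Finset ι) {p q : ι → ℝ}
    (hp : ∀ i ∈ s, 0 ≤ p i) (hq : ∀ i ∈ s, 0 < q i) (hpq : ∑ i ∈ s, q i ≤ ∑ i ∈ s, p i) :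
    ∑ i ∈ s, p i * Real.log (q i) ≤ ∑ i ∈ s, p i * Real.log (p i) := by
  have := Finset.sum_le_sum fun i hi => mul_sub_log_le_sub (hp i hi) (hq i hi)
  simp only [mul_sub, Finset.sum_sub_distrib] at this
  linarith

variable {k n : ℕ} {X : Set (Pt k)}

lemma cylinder_eq_inter (X : Set (Pt k)) (u : Fin n → Fin k) :
    cylinder X u = X ∩ ⋂ i : Fin n, (fun x : Pt k => x i) ⁻¹' {u i} := by
  ext x
  simp [cylinder]

lemma measurableSet_cylinder (hX : MeasurableSet X) (u : Fin n → Fin k) :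
    MeasurableSet (cylinder X u) := by
  rw [cylinder_eq_inter]
  exact hX.inter (.iInter fun i => measurable_pi_apply _ (measurableSet_singleton _))

lemma pairwiseDisjoint_cylinder (X : Set (Pt k)) (s : Set (Fin n → Fin k)) :
    s.PairwiseDisjoint (cylinder X) := by
  intro u _ v _ huv
  rw [Function.onFun, Set.disjoint_left]
  rintro x ⟨-, hu⟩ ⟨-, hv⟩
  exact huv (funext fun i => (hu i).symm.trans (hv i))

lemma biUnion_words_cylinder (X : Set (Pt k)) (n : ℕ) :
    ⋃ u ∈ words X n, cylinder X u = X := by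
  refine Set.Subset.antisymm (Set.iUnion₂_subset fun u _ => fun x hx => hx.1) fun x hx => ?_
  have hxu : x ∈ cylinder X (fun i : Fin n => x i) := ⟨hx, fun _ => rfl⟩
  exact Set.mem_biUnion (Finset.mem_filter.2 ⟨Finset.mem_univ _, x, hxu⟩) hxu

lemma sum_measureReal_cylinder (hX : MeasurableSet X) (μ : Measure (Pt k)) [IsFiniteMeasure μ]
    (n : ℕ) : ∑ u ∈ words X n, μ.real (cylinder X u) = μ.real X := by
  conv_rhs => rw [← biUnion_words_cylinder X n]
  exact (measureReal_biUnion_finset (pairwiseDisjoint_cylinder X _)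
    fun u _ => measurableSet_cylinder hX u).symm

lemma integral_le_sum_measureReal_cylinder_mul (hX : MeasurableSet X) (m : Measure (Pt k))
    [IsFiniteMeasure m] (hm : m Xᶜ = 0) {g : Pt k → ℝ} (hg : Integrable g m)
    {b : (Fin n → Fin k) → ℝ} (hb : ∀ u ∈ words X n, ∀ x ∈ cylinder X u, g x ≤ b u) :
    ∫ x, g x ∂m ≤ ∑ u ∈ words X n, m.real (cylinder X u) * b u := by
  have hcyl := measurableSet_cylinder (n := n) hX
  calc ∫ x, g x ∂m = ∫ x in X, g x ∂m := by
        rw [Measure.restrict_eq_self_of_ae_mem (mem_ae_iff.2 hm)]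
    _ = ∑ u ∈ words X n, ∫ x in cylinder X u, g x ∂m := by
        conv_lhs => rw [← biUnion_words_cylinder X n]
        exact integral_biUnion_finset _ (fun u _ => hcyl u) (pairwiseDisjoint_cylinder X _)
          fun u _ => hg.integrableOn
    _ ≤ ∑ u ∈ words X n, ∫ _ in cylinder X u, b u ∂m :=
        Finset.sum_le_sum fun u hu =>
          setIntegral_mono_on hg.integrableOn integrableOn_const (hcyl u) (hb u hu)
    _ = ∑ u ∈ words X n, m.real (cylinder X u) * b u := by
        simp only [setIntegral_const, smul_eq_mul]

lemma Hn_nonneg (m : Measure (Pt k)) [IsProbabilityMeasure m] (n : ℕ) : 0 ≤ Hn X m n := by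
  rw [Hn, ← Finset.sum_neg_distrib]
  exact Finset.sum_nonneg fun u _ => by
    simpa [Real.negMulLog] using Real.negMulLog_nonneg ENNReal.toReal_nonneg
      (ENNReal.toReal_le_of_le_ofReal zero_le_one (by simpa using prob_le_one))

lemma entropy_le_Hn_div (m : Measure (Pt k)) [IsProbabilityMeasure m] (hn : 0 < n) :
    entropy X m ≤ Hn X m n / n := by
  obtain ⟨j, rfl⟩ := Nat.exists_eq_add_one_of_ne_zero hn.ne'
  have hbdd : BddBelow (Set.range fun j : ℕ => Hn X m (j + 1) / (j + 1)) :=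
    ⟨0, Set.forall_mem_range.2 fun j => div_nonneg (Hn_nonneg m _) (by positivity)⟩
  simpa [entropy] using ciInf_le hbdd j

variable {f : ℕ → Pt k → ℝ} {μ : Measure (Pt k)} {P C : ℝ}

lemma GibbsWith.exp_mul_le (hG : GibbsWith X f μ P C) (hC : 0 < C) (hn : 0 < n)
    {u : Fin n → Fin k} (hu : u ∈ words X n) {x : Pt k} (hx : x ∈ cylinder X u)
    (hfx : 0 < f n x) : Real.exp (-(n : ℝ) * P) * f n x ≤ C * μ.real (cylinder X u) := by
  have h := (hG n hn u hu x hx).1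
  rw [div_le_div_iff₀ hC (by positivity), one_mul] at h
  rw [measureReal_def]
  linarith

lemma GibbsWith.log_le (hG : GibbsWith X f μ P C) (hC : 0 < C) (hn : 0 < n)
    {u : Fin n → Fin k} (hu : u ∈ words X n) {x : Pt k} (hx : x ∈ cylinder X u)
    (hfx : 0 < f n x) :
    0 < μ.real (cylinder X u) ∧
      Real.log (f n x) ≤ n * P + Real.log C + Real.log (μ.real (cylinder X u)) := by
  have h := hG.exp_mul_le hC hn hu hx hfx
  have hq : 0 < μ.real (cylinder X u) :=
    pos_of_mul_pos_right ((show 0 < Real.exp (-(n : ℝ) * P) * f n x by positivity).trans_le h)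
      hC.le
  refine ⟨hq, ?_⟩
  have := Real.log_le_log (by positivity) h
  rw [Real.log_mul (by positivity) hfx.ne', Real.log_exp, Real.log_mul hC.ne' hq.ne'] at this
  linarith

lemma GoodSeq.integrable_log (hX : IsClosed X) (hf : GoodSeq X f) (m : Measure (Pt k))
    [IsFiniteMeasure m] (hm : m Xᶜ = 0) (n : ℕ) : Integrable (fun x => Real.log (f n x)) m := by
  have hcont : ContinuousOn (fun x => Real.log (f n x)) X :=
    (hf n).1.log fun x hx => ((hf n).2 x hx).ne'
  have := hcont.integrableOn_compact (μ := m) hX.isCompact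
  rwa [IntegrableOn, Measure.restrict_eq_self_of_ae_mem (mem_ae_iff.2 hm)] at this

lemma GibbsWith.Hn_add_integral_log_le (hX : IsClosed X) (hf : GoodSeq X f)
    [IsProbabilityMeasure μ] (hG : GibbsWith X f μ P C) (hC : 0 < C) (m : Measure (Pt k))
    [IsProbabilityMeasure m] (hm : m Xᶜ = 0) (hn : 0 < n) :
    Hn X m n + ∫ x, Real.log (f n x) ∂m ≤ n * P + Real.log C := by
  set p : (Fin n → Fin k) → ℝ := fun u => m.real (cylinder X u)
  set q : (Fin n → Fin k) → ℝ := fun u => μ.real (cylinder X u)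
  have hq : ∀ u ∈ words X n, 0 < q u := fun u hu =>
    have ⟨x, hx⟩ := (Finset.mem_filter.1 hu).2
    (hG.log_le hC hn hu hx ((hf n).2 x hx.1)).1
  have hp_sum : ∑ u ∈ words X n, p u = 1 := by
    rw [sum_measureReal_cylinder hX.measurableSet, measureReal_def,
      (prob_compl_eq_zero_iff hX.measurableSet).1 hm, ENNReal.toReal_one]
  have hq_sum : ∑ u ∈ words X n, q u ≤ 1 := by
    rw [sum_measureReal_cylinder hX.measurableSet]
    exact measureReal_le_one
  have hintegral : ∫ x, Real.log (f n x) ∂m ≤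
      ∑ u ∈ words X n, p u * (n * P + Real.log C + Real.log (q u)) :=
    integral_le_sum_measureReal_cylinder_mul hX.measurableSet m hm
      (hf.integrable_log hX m hm n) fun u hu x hx => (hG.log_le hC hn hu hx ((hf n).2 x hx.1)).2
  have hgibbs : ∑ u ∈ words X n, p u * Real.log (q u) ≤ ∑ u ∈ words X n, p u * Real.log (p u) :=
    sum_mul_log_le_sum_mul_log_self _ (fun _ _ => measureReal_nonneg) hq (hp_sum ▸ hq_sum)
  have hHn : Hn X m n = -∑ u ∈ words X n, p u * Real.log (p u) := rfl
  calc Hn X m n + ∫ x, Real.log (f n x) ∂m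
      ≤ Hn X m n + ∑ u ∈ words X n, p u * (n * P + Real.log C + Real.log (q u)) := by gcongr
    _ = n * P + Real.log C + (∑ u ∈ words X n, p u * Real.log (q u)
          - ∑ u ∈ words X n, p u * Real.log (p u)) := by
        simp only [hHn, mul_add, Finset.sum_add_distrib, ← Finset.sum_mul, hp_sum]
        ring
    _ ≤ n * P + Real.log C := by linarith

theorem stmt15_general {k : ℕ} (X : Set (Pt k)) (f : ℕ → Pt k → ℝ)
    (hX : IsSubshift X) (hf : GoodSeq X f)
    (μ : Measure (Pt k)) (hμprob : IsProbabilityMeasure μ)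
    (P C' : ℝ) (hC' : 0 < C') (hGibbs : GibbsWith X f μ P C') :
    ∀ m : Measure (Pt k), IsProbabilityMeasure m → m Xᶜ = 0 → InvariantM m →
      ∀ L : ℝ,
        Filter.Tendsto (fun n : ℕ => (∫ x, Real.log (f n x) ∂m) / n)
          Filter.atTop (nhds L) →
        entropy X m + L ≤ P := by
  intro m hm hmX _ L hL
  have hbound : ∀ᶠ n : ℕ in atTop,
      entropy X m + (∫ x, Real.log (f n x) ∂m) / n ≤ P + Real.log C' / n := by
    filter_upwards [eventually_gt_atTop 0] with n hn
    have hn' : (0 : ℝ) < n := Nat.cast_pos.2 hn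
    calc entropy X m + (∫ x, Real.log (f n x) ∂m) / n
        ≤ (Hn X m n + ∫ x, Real.log (f n x) ∂m) / n := by
          rw [add_div]; gcongr; exact entropy_le_Hn_div m hn
      _ ≤ (n * P + Real.log C') / n :=
          div_le_div_of_nonneg_right (hGibbs.Hn_add_integral_log_le hX.1 hf hC' m hmX hn) hn'.le
      _ = P + Real.log C' / n := by field_simp
  refine le_of_tendsto_of_tendsto (tendsto_const_nhds.add hL) ?_ hbound
  simpa using tendsto_const_nhds.add (tendsto_const_div_atTop_nhds_zero_nat (Real.log C'))

/-- the pressure constant of an invariant Gibbs measure for a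
superadditive sequence dominates the free energy of every invariant measure. -/
theorem stmt15 {k : ℕ} (X : Set (Pt k)) (f : ℕ → Pt k → ℝ)
    (hX : IsSubshift X) (hf : GoodSeq X f) (hsup : Superadditive X f)
    (μ : Measure (Pt k)) (hμprob : IsProbabilityMeasure μ) (hμsupp : μ Xᶜ = 0)
    (hμinv : InvariantM μ)
    (P C' : ℝ) (hC' : 0 < C') (hGibbs : GibbsWith X f μ P C') :
    ∀ m : Measure (Pt k), IsProbabilityMeasure m → m Xᶜ = 0 → InvariantM m →
      ∀ L : ℝ,
        Filter.Tendsto (fun n : ℕ => (∫ x, Real.log (f n x) ∂m) / n)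
          Filter.atTop (nhds L) →
        entropy X m + L ≤ P :=
  stmt15_general X f hX hf μ hμprob P C' hC' hGibbs

end Paper
end
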